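/- With Ψ(w) := ∫_{−∞}^0 ∏_{j=1}^d Φ₁(t − w_j) dt and η := K/√(log d) for constants K > 0 and d ≥ 3, the sum of first partial derivatives satisfies sup_{w∈ℝ^d} Σ_{j=1}^d sup_{‖y‖_∞ ≤ η} |∂_j Ψ(w + y)| ≤ C, where C depends only on K. -/

import Mathlib

open MeasureTheory

/-- The standard normal density. -/
noncomputable def phi1 (t : ℝ) : ℝ := Real.exp (-t ^ 2 / 2) / Real.sqrt (2 * Real.pi)

/-- The standard normal cdf. -/
noncomputable def Phi1 (t : ℝ) : ℝ := ∫ u in Set.Iic t, phi1 u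

/-- Ψ(w) := ∫_{−∞}^0 ∏_j Φ₁(t − w_j) dt. -/
noncomputable def Psi (d : ℕ) (w : Fin d → ℝ) : ℝ :=
  ∫ t in Set.Iic (0 : ℝ), ∏ j, Phi1 (t - w j)

/-!
The integrals `I_j(v) = ∫_{-∞}^0 ∏_{l≠j} Φ(t − v_l) φ(t − v_j) dt` (formally `−∂ⱼΨ(v)`) sum to
`∏_l Φ(−v_l) ≤ 1`, because their integrands add up to the derivative of `t ↦ ∏_l Φ(t − v_l)`.
Moving the point by `y` with `‖y‖∞ ≤ η` shifts every argument by at most `η`: the monotone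
factors `Φ` absorb this, and for `|e| ≤ c` the Gaussian comparison
`φ(b − e) ≤ e^{2cT + 2c²} φ(b + c) + e^{c²/2 + cT − T²/2} φ(b − c − T)`
absorbs it in the density at the price of a tail term. With `c = 2η` and `T = √(2 log d)` we get
`ηT = √2 K`, so the first constant is bounded and the `d` tail terms together contribute
`e^{c²/2 + cT}`.

The derivative is bounded through a Lipschitz estimate along `e_j`, which also covers the junk
value `fderiv = 0` where Ψ is not differentiable, so differentiability is never needed.
-/

open Real Set Filter Topology

lemma phi1_eq_gaussianPDFReal : phi1 = ProbabilityTheory.gaussianPDFReal 0 1 := by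
  ext t
  simp [phi1, ProbabilityTheory.gaussianPDFReal, div_eq_inv_mul]

lemma phi1_nonneg (t : ℝ) : 0 ≤ phi1 t := by
  unfold phi1; positivity

lemma continuous_phi1 : Continuous phi1 := by
  unfold phi1; fun_prop

lemma integrable_phi1 : Integrable phi1 :=
  phi1_eq_gaussianPDFReal ▸ ProbabilityTheory.integrable_gaussianPDFReal 0 1

lemma integral_phi1 : ∫ t, phi1 t = 1 :=
  phi1_eq_gaussianPDFReal ▸ ProbabilityTheory.integral_gaussianPDFReal_eq_one 0 one_ne_zero

lemma integral_phi1_sub (c : ℝ) : ∫ t, phi1 (t - c) = 1 := by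
  rw [integral_sub_right_eq_self phi1 c, integral_phi1]

lemma phi1_le_exp_mul_phi1 {a b k : ℝ} (h : -a ^ 2 / 2 ≤ k - b ^ 2 / 2) :
    phi1 a ≤ exp k * phi1 b := by
  rw [phi1, phi1, mul_div_assoc', ← exp_add]
  gcongr
  linarith

lemma Phi1_nonneg (t : ℝ) : 0 ≤ Phi1 t :=
  setIntegral_nonneg measurableSet_Iic fun u _ => phi1_nonneg u

lemma Phi1_le_one (t : ℝ) : Phi1 t ≤ 1 :=
  integral_phi1 ▸ setIntegral_le_integral integrable_phi1 (.of_forall phi1_nonneg)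

lemma monotone_Phi1 : Monotone Phi1 := fun _ _ h =>
  setIntegral_mono_set integrable_phi1.integrableOn (.of_forall phi1_nonneg)
    (Iic_subset_Iic.2 h).eventuallyLE

lemma Phi1_le_exp (b : ℝ) : Phi1 b ≤ exp (b + 1 / 2) := by
  calc Phi1 b ≤ ∫ u in Iic b, exp (b + 1 / 2) * phi1 (u + 1) :=
        setIntegral_mono_on integrable_phi1.integrableOn
          ((integrable_phi1.comp_add_right 1).const_mul _).integrableOn measurableSet_Iic
          fun u (hu : u ≤ b) => phi1_le_exp_mul_phi1 (by nlinarith)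
    _ ≤ ∫ u, exp (b + 1 / 2) * phi1 (u + 1) :=
        setIntegral_le_integral ((integrable_phi1.comp_add_right 1).const_mul _)
          (.of_forall fun u => mul_nonneg (exp_nonneg _) (phi1_nonneg _))
    _ = exp (b + 1 / 2) := by
        rw [integral_const_mul, integral_add_right_eq_self phi1 1, integral_phi1, mul_one]

lemma hasDerivAt_Phi1 (b : ℝ) : HasDerivAt Phi1 (phi1 b) b := by
  have h : HasDerivAt (fun t => Phi1 0 + ∫ u in (0 : ℝ)..t, phi1 u) (phi1 b) b :=
    (intervalIntegral.integral_hasDerivAt_right integrable_phi1.intervalIntegrable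
      continuous_phi1.aestronglyMeasurable.stronglyMeasurableAtFilter
      continuous_phi1.continuousAt).const_add _
  refine h.congr_of_eventuallyEq (.of_forall fun t => ?_)
  dsimp only
  rw [← intervalIntegral.integral_Iic_sub_Iic integrable_phi1.integrableOn
    integrable_phi1.integrableOn, Phi1, Phi1, add_sub_cancel]

lemma continuous_Phi1 : Continuous Phi1 :=
  continuous_iff_continuousAt.2 fun b => (hasDerivAt_Phi1 b).continuousAt

lemma tendsto_Phi1_atBot : Tendsto Phi1 atBot (𝓝 0) := by
  have h : Tendsto (fun b => exp (b + 1 / 2)) atBot (𝓝 0) :=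
    tendsto_exp_atBot.comp (tendsto_atBot_add_const_right _ _ tendsto_id)
  exact squeeze_zero Phi1_nonneg Phi1_le_exp h

lemma integrableOn_Phi1_sub (c : ℝ) : IntegrableOn (fun u => Phi1 (u - c)) (Iic 0) := by
  refine ((integrableOn_exp_Iic 0).const_mul (exp (1 / 2 - c))).mono'
    (continuous_Phi1.comp (continuous_sub_right c)).aestronglyMeasurable.restrict
    (.of_forall fun u => ?_)
  rw [norm_of_nonneg (Phi1_nonneg _), ← exp_add]
  exact (Phi1_le_exp _).trans_eq (by ring_nf)

lemma phi1_sub_le {b e c T : ℝ} (hT : 0 ≤ T) (he : |e| ≤ c) :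
    phi1 (b - e) ≤ exp (2 * c * T + 2 * c ^ 2) * phi1 (b + c) +
      exp (c ^ 2 / 2 + c * T - T ^ 2 / 2) * phi1 (b - (c + T)) := by
  obtain ⟨he₁, he₂⟩ := abs_le.1 he
  rcases le_or_gt b T with hb | hb
  · refine le_add_of_le_of_nonneg (phi1_le_exp_mul_phi1 ?_)
      (mul_nonneg (exp_nonneg _) (phi1_nonneg _))
    nlinarith [mul_nonneg (by linarith : 0 ≤ c + e) (by linarith : 0 ≤ 2 * (T - b) + c + e),
      mul_nonneg (by linarith : 0 ≤ c - e) (by linarith : 0 ≤ T + c)]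
  · refine le_add_of_nonneg_of_le (mul_nonneg (exp_nonneg _) (phi1_nonneg _))
      (phi1_le_exp_mul_phi1 ?_)
    nlinarith [mul_nonneg (by linarith : 0 ≤ b) (by linarith : 0 ≤ c - e),
      mul_nonneg hT (by linarith : 0 ≤ b - T), sq_nonneg e]

lemma integrableOn_prod_Phi1_mul {ι : Type*} (S : Finset ι) (x : ι → ℝ) {g : ℝ → ℝ}
    {s : Set ℝ} (hg : IntegrableOn g s) :
    IntegrableOn (fun u => (∏ l ∈ S, Phi1 (u - x l)) * g u) s :=
  hg.bdd_mul (c := 1)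
    (Continuous.aestronglyMeasurable <| continuous_finsetProd _ fun l _ =>
      continuous_Phi1.comp (continuous_sub_right _))
    (.of_forall fun u => by
      rw [norm_of_nonneg (Finset.prod_nonneg fun l _ => Phi1_nonneg _)]
      exact Finset.prod_le_one (fun l _ => Phi1_nonneg _) fun l _ => Phi1_le_one _)

lemma setIntegral_prod_Phi1_mul_phi1_le_one {ι : Type*} (S : Finset ι) (x : ι → ℝ) (a : ℝ) :
    ∫ u in Iic 0, (∏ l ∈ S, Phi1 (u - x l)) * phi1 (u - a) ≤ 1 := by
  have hφ : Integrable fun u => phi1 (u - a) := integrable_phi1.comp_sub_right a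
  calc ∫ u in Iic 0, (∏ l ∈ S, Phi1 (u - x l)) * phi1 (u - a)
      ≤ ∫ u in Iic 0, phi1 (u - a) :=
        setIntegral_mono (integrableOn_prod_Phi1_mul S x hφ.integrableOn) hφ.integrableOn
          fun u => mul_le_of_le_one_left (phi1_nonneg _)
            (Finset.prod_le_one (fun l _ => Phi1_nonneg _) fun l _ => Phi1_le_one _)
    _ ≤ ∫ u, phi1 (u - a) := setIntegral_le_integral hφ (.of_forall fun u => phi1_nonneg _)
    _ = 1 := integral_phi1_sub a

lemma abs_mul_Phi1_sub_le {p a b M : ℝ} (hp : 0 ≤ p) (hM : ∀ v ∈ uIcc a b, p * phi1 v ≤ M) :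
    p * |Phi1 b - Phi1 a| ≤ M * |b - a| := by
  have h := Convex.norm_image_sub_le_of_norm_hasDerivWithin_le
    (fun v _ => ((hasDerivAt_Phi1 v).const_mul p).hasDerivWithinAt)
    (fun v hv => (abs_of_nonneg (mul_nonneg hp (phi1_nonneg v))).trans_le (hM v hv))
    (convex_uIcc a b) left_mem_uIcc right_mem_uIcc
  rwa [Real.norm_eq_abs, Real.norm_eq_abs, ← mul_sub, abs_mul, abs_of_nonneg hp] at h

lemma abs_fderiv_apply_le_of_abs_sub_le {E : Type*} [NormedAddCommGroup E] [NormedSpace ℝ E]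
    {f : E → ℝ} {x v : E} {r L : ℝ} (hr : 0 < r)
    (h : ∀ t, |t| ≤ r → |f (x + t • v) - f x| ≤ L * |t|) : |fderiv ℝ f x v| ≤ L := by
  have hL : 0 ≤ L := by
    have := (abs_nonneg _).trans (h r (abs_of_pos hr).le)
    exact nonneg_of_mul_nonneg_left this (abs_pos.2 hr.ne')
  by_cases hf : DifferentiableAt ℝ f x
  · have hline : HasDerivAt (fun t : ℝ => x + t • v) v 0 := by
      simpa using ((hasDerivAt_id (0 : ℝ)).smul_const v).const_add x
    have hg : HasDerivAt (fun t : ℝ => f (x + t • v)) (fderiv ℝ f x v) 0 := by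
      have hf' : HasFDerivAt f (fderiv ℝ f x) (x + (0 : ℝ) • v) := by
        simpa using hf.hasFDerivAt
      exact hf'.comp_hasDerivAt (0 : ℝ) hline
    refine hg.le_of_lip' hL ?_
    filter_upwards [Metric.ball_mem_nhds (0 : ℝ) hr] with t ht
    simpa using h t (mem_ball_zero_iff.1 ht).le
  · simpa [fderiv_zero_of_not_differentiableAt hf] using hL

section Psi

variable {d : ℕ}

lemma prod_Phi1_sub_add_smul_single (x : Fin d → ℝ) (j : Fin d) (t u : ℝ) :
    ∏ l, Phi1 (u - (x + t • (Pi.single j 1 : Fin d → ℝ)) l) =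
      (∏ l ∈ Finset.univ.erase j, Phi1 (u - x l)) * Phi1 (u - (x j + t)) := by
  rw [← Finset.prod_erase_mul _ _ (Finset.mem_univ j)]
  congr 1
  · refine Finset.prod_congr rfl fun l hl => ?_
    simp [Pi.single_eq_of_ne (Finset.ne_of_mem_erase hl)]
  · simp

lemma Psi_add_smul_single (x : Fin d → ℝ) (j : Fin d) (t : ℝ) :
    Psi d (x + t • Pi.single j 1) =
      ∫ u in Iic 0, (∏ l ∈ Finset.univ.erase j, Phi1 (u - x l)) * Phi1 (u - (x j + t)) := by
  simp only [Psi, prod_Phi1_sub_add_smul_single]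

lemma abs_Psi_add_smul_single_sub_le {x : Fin d → ℝ} {j : Fin d} {r : ℝ} {m : ℝ → ℝ}
    (hm : IntegrableOn m (Iic 0))
    (hbound : ∀ u ≤ 0, ∀ e, |e| ≤ r →
      (∏ l ∈ Finset.univ.erase j, Phi1 (u - x l)) * phi1 (u - x j - e) ≤ m u)
    {t : ℝ} (ht : |t| ≤ r) :
    |Psi d (x + t • Pi.single j 1) - Psi d x| ≤ (∫ u in Iic 0, m u) * |t| := by
  set P := fun u => ∏ l ∈ Finset.univ.erase j, Phi1 (u - x l)
  have hP : ∀ u, 0 ≤ P u := fun u => Finset.prod_nonneg fun l _ => Phi1_nonneg _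
  have hint : ∀ s : ℝ, IntegrableOn (fun u => P u * Phi1 (u - (x j + s))) (Iic 0) := fun s =>
    integrableOn_prod_Phi1_mul _ x (integrableOn_Phi1_sub _)
  have hpoint : ∀ u ∈ Iic (0 : ℝ),
      |P u * Phi1 (u - (x j + t)) - P u * Phi1 (u - (x j + 0))| ≤ m u * |t| := by
    intro u hu
    rw [← mul_sub, abs_mul, abs_of_nonneg (hP u)]
    refine (abs_mul_Phi1_sub_le (M := m u) (hP u) fun v hv => ?_).trans_eq
      (by rw [← abs_neg]; ring_nf)
    rw [show v = u - x j - (u - x j - v) by ring]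
    refine hbound u hu _ ?_
    calc |u - x j - v| = |v - (u - (x j + 0))| := by rw [abs_sub_comm, add_zero]
      _ ≤ |u - (x j + t) - (u - (x j + 0))| := abs_sub_left_of_mem_uIcc hv
      _ = |t| := by rw [← abs_neg]; ring_nf
      _ ≤ r := ht
  have h0 := Psi_add_smul_single x j 0
  rw [zero_smul, add_zero] at h0
  rw [Psi_add_smul_single, h0, ← integral_sub (hint t) (hint 0), ← integral_mul_const]
  exact (abs_integral_le_integral_abs).trans (setIntegral_mono_on ((hint t).sub (hint 0)).abs
    (hm.mul_const _) measurableSet_Iic hpoint)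

lemma prod_Phi1_mul_phi1_le_of_norm_le {w y : Fin d → ℝ} {η c T e : ℝ} (hy : ‖y‖ ≤ η)
    (hc : 2 * η ≤ c) (hT : 0 ≤ T) (he : |e| ≤ η) (j : Fin d) (u : ℝ) :
    (∏ l ∈ Finset.univ.erase j, Phi1 (u - (w + y) l)) * phi1 (u - (w + y) j - e) ≤
      (∏ l ∈ Finset.univ.erase j, Phi1 (u - (w l - c))) *
        (exp (2 * c * T + 2 * c ^ 2) * phi1 (u - (w j - c)) +
          exp (c ^ 2 / 2 + c * T - T ^ 2 / 2) * phi1 (u - (w j + (c + T)))) := by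
  have hη : 0 ≤ η := (norm_nonneg y).trans hy
  have hyl : ∀ l, |y l| ≤ η := fun l => (norm_le_pi_norm y l).trans hy
  refine mul_le_mul (Finset.prod_le_prod (fun l _ => Phi1_nonneg _) fun l _ => ?_) ?_
    (phi1_nonneg _) (Finset.prod_nonneg fun l _ => Phi1_nonneg _)
  · refine monotone_Phi1 ?_
    have := (abs_le.1 (hyl l)).1
    simp only [Pi.add_apply]
    linarith
  · have hye : |y j + e| ≤ c := by linarith [abs_add_le (y j) e, hyl j]
    calc phi1 (u - (w + y) j - e) = phi1 (u - w j - (y j + e)) := by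
          rw [Pi.add_apply]; ring_nf
      _ ≤ _ := phi1_sub_le hT hye
      _ = _ := by congr 3 <;> ring

theorem abs_fderiv_Psi_le {w y : Fin d → ℝ} {η c T : ℝ} (hη : 0 < η) (hy : ‖y‖ ≤ η)
    (hc : 2 * η ≤ c) (hT : 0 ≤ T) (j : Fin d) :
    |fderiv ℝ (Psi d) (w + y) (Pi.single j 1)| ≤
      exp (2 * c * T + 2 * c ^ 2) *
        (∫ u in Iic 0, (∏ l ∈ Finset.univ.erase j, Phi1 (u - (w l - c))) * phi1 (u - (w j - c))) +
      exp (c ^ 2 / 2 + c * T - T ^ 2 / 2) := by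
  set A := exp (2 * c * T + 2 * c ^ 2)
  set B := exp (c ^ 2 / 2 + c * T - T ^ 2 / 2)
  set P := fun u => ∏ l ∈ Finset.univ.erase j, Phi1 (u - (w l - c))
  have hP : ∀ a, IntegrableOn (fun u => P u * phi1 (u - a)) (Iic 0) := fun a =>
    integrableOn_prod_Phi1_mul _ _ (integrable_phi1.comp_sub_right a).integrableOn
  have hm : IntegrableOn
      (fun u => P u * (A * phi1 (u - (w j - c)) + B * phi1 (u - (w j + (c + T))))) (Iic 0) :=
    integrableOn_prod_Phi1_mul _ _ <| Integrable.integrableOn <|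
      ((integrable_phi1.comp_sub_right _).const_mul A).add
        ((integrable_phi1.comp_sub_right _).const_mul B)
  refine (abs_fderiv_apply_le_of_abs_sub_le hη fun t ht =>
    abs_Psi_add_smul_single_sub_le hm
      (fun u _ e he => prod_Phi1_mul_phi1_le_of_norm_le hy hc hT he j u) ht).trans ?_
  calc ∫ u in Iic 0, P u * (A * phi1 (u - (w j - c)) + B * phi1 (u - (w j + (c + T))))
      = A * (∫ u in Iic 0, P u * phi1 (u - (w j - c))) +
          B * ∫ u in Iic 0, P u * phi1 (u - (w j + (c + T))) := by
        rw [← integral_const_mul, ← integral_const_mul,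
          ← integral_add ((hP _).const_mul A) ((hP _).const_mul B)]
        congr 1 with u
        ring
    _ ≤ A * (∫ u in Iic 0, P u * phi1 (u - (w j - c))) + B * 1 := by
        gcongr
        exact setIntegral_prod_Phi1_mul_phi1_le_one _ _ _
    _ = _ := by rw [mul_one]

lemma sum_setIntegral_prod_Phi1_mul_phi1 [NeZero d] (v : Fin d → ℝ) :
    ∑ j, ∫ u in Iic 0, (∏ l ∈ Finset.univ.erase j, Phi1 (u - v l)) * phi1 (u - v j) =
      ∏ l, Phi1 (0 - v l) := by
  have hderiv : ∀ u ∈ Iic (0 : ℝ), HasDerivAt (fun u => ∏ l, Phi1 (u - v l))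
      (∑ j, (∏ l ∈ Finset.univ.erase j, Phi1 (u - v l)) * phi1 (u - v j)) u := fun u _ => by
    simpa using HasDerivAt.fun_finsetProd (u := Finset.univ) fun l _ =>
      (hasDerivAt_Phi1 (u - v l)).comp_sub_const u (v l)
  have hlim : Tendsto (fun u => ∏ l, Phi1 (u - v l)) atBot (𝓝 0) := by
    have := tendsto_finsetProd (Finset.univ : Finset (Fin d)) fun l _ =>
      tendsto_Phi1_atBot.comp (tendsto_atBot_add_const_right _ (-v l) tendsto_id)
    simpa [sub_eq_add_neg, zero_pow (NeZero.ne d)] using this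
  rw [← integral_finsetSum _ fun j _ => integrableOn_prod_Phi1_mul _ _
      (integrable_phi1.comp_sub_right _).integrableOn,
    integral_Iic_of_hasDerivAt_of_tendsto' hderiv
      (integrable_finsetSum _ fun j _ => integrableOn_prod_Phi1_mul _ _
        (integrable_phi1.comp_sub_right _).integrableOn) hlim, sub_zero]

theorem sum_iSup_abs_fderiv_Psi_le [NeZero d] (w : Fin d → ℝ) {η c T : ℝ} (hη : 0 < η)
    (hc : 2 * η ≤ c) (hT : 0 ≤ T) :
    ∑ j : Fin d, (⨆ y : {y : Fin d → ℝ // ‖y‖ ≤ η},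
        |fderiv ℝ (Psi d) (w + y.1) (Pi.single j 1)|) ≤
      exp (2 * c * T + 2 * c ^ 2) + d * exp (c ^ 2 / 2 + c * T - T ^ 2 / 2) := by
  have : Nonempty {y : Fin d → ℝ // ‖y‖ ≤ η} := ⟨⟨0, by simpa using hη.le⟩⟩
  set A := exp (2 * c * T + 2 * c ^ 2)
  set B := exp (c ^ 2 / 2 + c * T - T ^ 2 / 2)
  set I := fun j : Fin d =>
    ∫ u in Iic 0, (∏ l ∈ Finset.univ.erase j, Phi1 (u - (w l - c))) * phi1 (u - (w j - c))
  calc _ ≤ ∑ j, (A * I j + B) :=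
        Finset.sum_le_sum fun j _ => ciSup_le fun y => abs_fderiv_Psi_le hη y.2 hc hT j
    _ = A * ∑ j, I j + d * B := by
        rw [Finset.sum_add_distrib, ← Finset.mul_sum, Finset.sum_const, Finset.card_univ,
          Fintype.card_fin, nsmul_eq_mul]
    _ ≤ A * 1 + d * B := by
        gcongr
        rw [sum_setIntegral_prod_Phi1_mul_phi1 (fun l => w l - c)]
        exact Finset.prod_le_one (fun l _ => Phi1_nonneg _) fun l _ => Phi1_le_one _
    _ = A + d * B := by rw [mul_one]

end Psi

/-- for d ≥ 3 and η = K/√(log d),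
sup_w Σ_j sup_{‖y‖_∞ ≤ η} |∂_j Ψ(w + y)| ≤ C with C depending only on K. -/
theorem stmt9 (K : ℝ) (hK : 0 < K) :
    ∃ C : ℝ, ∀ d : ℕ, 3 ≤ d → ∀ w : Fin d → ℝ,
      ∑ j : Fin d,
        (⨆ y : {y : Fin d → ℝ // ‖y‖ ≤ K / Real.sqrt (Real.log d)},
          |fderiv ℝ (Psi d) (w + y.1) (Pi.single j 1)|) ≤ C := by
  refine ⟨exp (4 * √2 * K + 8 * K ^ 2) + exp (2 * K ^ 2 + 2 * √2 * K), fun d hd w => ?_⟩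
  have : NeZero d := ⟨by omega⟩
  have hlog : 1 ≤ log d := by
    rw [le_log_iff_exp_le (by positivity)]
    have : (3 : ℝ) ≤ d := by exact_mod_cast hd
    linarith [exp_one_lt_d9]
  set s := √(log d)
  have hs : 1 ≤ s := one_le_sqrt.2 hlog
  set η := K / s
  have hcT : 2 * η * (√2 * s) = 2 * √2 * K := by
    rw [← div_mul_cancel₀ K (by positivity : s ≠ 0)]; ring
  have hηK : η ^ 2 ≤ K ^ 2 := pow_le_pow_left₀ (by positivity) (div_le_self hK.le hs) 2
  have hT : (√2 * s) ^ 2 / 2 = log d := by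
    rw [mul_pow, sq_sqrt zero_le_two, sq_sqrt (by positivity)]; ring
  refine (sum_iSup_abs_fderiv_Psi_le w (T := √2 * s) (by positivity) le_rfl (by positivity)).trans
    (add_le_add (exp_le_exp.2 ?_) ?_)
  · linarith
  · rw [hT, exp_sub, exp_log (by positivity), mul_div_cancel₀ _ (by positivity)]
    exact exp_le_exp.2 (by linarith)
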